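/- arXiv:2605.22803 — 4 statements merged into one kernel-verified Lean document; each statement's English description precedes it below -/
import Mathlib

section
/- Let m ∈ ℕ and let p(x) = Σ_{k=-m}^{m} a_k e^{ikx} be a trigonometric polynomial of degree exactly m (so a_{-m} ≠ 0 or a_m ≠ 0). Then the function u ↦ (1/m) Σ_{j=1}^{m} p(2πj/m + u) is not constant; in fact it equals a₀ + a_{-m} e^{-imu} + a_m e^{imu}. -/
/-!
Averaging `e^{ikx}` over the `m` equispaced points `2πj/m + u` multiplies it by the sum of the
`m`-th roots of unity `e^{2πikj/m}`, which is `m` when `m ∣ k` and `0` otherwise. Among the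
frequencies `|k| ≤ m` only `k = -m, 0, m` survive, leaving `a₀ + a_{-m} e^{-imu} + a_m e^{imu}`;
evaluating at `mu = 0, π, π/2` shows this is constant only if `a_{-m} = a_m = 0`.
-/

open Complex Finset
open scoped Real

theorem sum_Icc_pow_eq_ite {K : Type*} [Field K] [DecidableEq K] {w : K} {m : ℕ}
    (hw : w ^ m = 1) : ∑ j ∈ Icc 1 m, w ^ j = if w = 1 then (m : K) else 0 := by
  split_ifs with h
  · simp [h]
  · have hshift : ∑ j ∈ Icc 1 m, w ^ j = w * ∑ j ∈ range m, w ^ j := by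
      rw [mul_sum, range_eq_Ico, ← Ico_add_one_right_eq_Icc]
      simpa [pow_succ'] using (sum_Ico_add' (fun j => w ^ j) 0 m 1).symm
    rw [hshift, geom_sum_eq h, hw, sub_self, zero_div, mul_zero]

theorem sum_Icc_exp_equispaced {m : ℕ} (hm : m ≠ 0) (k : ℤ) (u : ℝ) :
    ∑ j ∈ Icc 1 m, exp (I * k * ((2 * π * j / m + u : ℝ) : ℂ)) =
      if (m : ℤ) ∣ k then m * exp (I * k * u) else 0 := by
  set ζ := exp (2 * π * I / m)
  have hζ : IsPrimitiveRoot ζ m := isPrimitiveRoot_exp m hm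
  have hterm (j : ℕ) :
      exp (I * k * ((2 * π * j / m + u : ℝ) : ℂ)) = exp (I * k * u) * (ζ ^ k) ^ j := by
    rw [← exp_int_mul, ← exp_nat_mul, ← exp_add]
    congr 1
    push_cast
    ring
  have hw : (ζ ^ k) ^ m = 1 := by
    rw [← zpow_natCast, ← zpow_mul, mul_comm, zpow_mul, zpow_natCast, hζ.pow_eq_one, one_zpow]
  simp_rw [hterm, ← mul_sum, sum_Icc_pow_eq_ite hw, hζ.zpow_eq_one_iff_dvd]
  split_ifs <;> ring

theorem filter_dvd_Icc_neg_self {m : ℤ} (hm : 0 < m) :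
    {k ∈ Icc (-m) m | m ∣ k} = {-m, 0, m} := by
  ext k
  simp only [mem_filter, mem_Icc, mem_insert, mem_singleton]
  constructor
  · rintro ⟨⟨hlo, hhi⟩, t, rfl⟩
    have : -1 ≤ t := by nlinarith
    have : t ≤ 1 := by nlinarith
    interval_cases t <;> simp
  · rintro (rfl | rfl | rfl) <;> simp [hm.le]

theorem average_equispaced_trigPoly {m : ℕ} (hm : m ≠ 0) (a : ℤ → ℂ) (u : ℝ) :
    (m : ℂ)⁻¹ * ∑ j ∈ Icc 1 m, ∑ k ∈ Icc (-(m : ℤ)) m,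
        a k * exp (I * k * ((2 * π * j / m + u : ℝ) : ℂ)) =
      a 0 + a (-m) * exp (-(I * m * u)) + a m * exp (I * m * u) := by
  have hmZ : (0 : ℤ) < m := by omega
  rw [sum_comm]
  simp_rw [← mul_sum, sum_Icc_exp_equispaced hm, mul_ite, mul_zero, ← sum_filter,
    filter_dvd_Icc_neg_self hmZ]
  rw [sum_insert (by simp; omega), sum_pair (by omega)]
  push_cast
  simp only [mul_zero, zero_mul, exp_zero]
  field_simp
  ring

theorem eq_zero_of_forall_mul_exp_neg_add_mul_exp_eq {A B c : ℂ}
    (h : ∀ θ : ℝ, A * exp (-(θ * I)) + B * exp (θ * I) = c) : A = 0 ∧ B = 0 := by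
  have h0 := h 0
  have hπ := h π
  have hπ2 := h (π / 2)
  simp only [ofReal_zero, zero_mul, neg_zero, exp_zero, exp_neg, exp_pi_mul_I,
    ofReal_div, ofReal_ofNat, exp_pi_div_two_mul_I, inv_I, inv_neg, inv_one] at h0 hπ hπ2
  constructor
  · linear_combination (1 - I) / 4 * h0 + (-1 - I) / 4 * hπ + I / 2 * hπ2 + (A - B) / 2 * I_sq
  · linear_combination (1 + I) / 4 * h0 + (I - 1) / 4 * hπ - I / 2 * hπ2 + (B - A) / 2 * I_sq

/-- If `p(x) = ∑_{k=-m}^m a_k e^{ikx}` is a trigonometric polynomial of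
degree exactly `m ≥ 1` (so `a_{-m} ≠ 0` or `a_m ≠ 0`), then
`u ↦ (1/m) ∑_{j=1}^m p(2πj/m + u)` equals `a₀ + a_{-m} e^{-imu} + a_m e^{imu}`,
and in particular it is not constant. -/
theorem stmt4 (m : ℕ) (hm : 1 ≤ m) (a : ℤ → ℂ)
    (hdeg : a (-(m : ℤ)) ≠ 0 ∨ a (m : ℤ) ≠ 0) (p : ℝ → ℂ)
    (hp : ∀ x : ℝ, p x = ∑ k ∈ Finset.Icc (-(m : ℤ)) (m : ℤ),
      a k * Complex.exp (Complex.I * (k : ℂ) * (x : ℂ))) :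
    (∀ u : ℝ,
      ((m : ℂ))⁻¹ * ∑ j ∈ Finset.Icc 1 m, p (2 * Real.pi * (j : ℝ) / (m : ℝ) + u) =
        a 0 + a (-(m : ℤ)) * Complex.exp (-(Complex.I * (m : ℂ) * (u : ℂ))) +
          a (m : ℤ) * Complex.exp (Complex.I * (m : ℂ) * (u : ℂ))) ∧
    ¬ ∃ c : ℂ, ∀ u : ℝ,
      ((m : ℂ))⁻¹ * ∑ j ∈ Finset.Icc 1 m, p (2 * Real.pi * (j : ℝ) / (m : ℝ) + u) = c := by
  have hm0 : m ≠ 0 := by omega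
  obtain rfl := funext hp
  have haverage := average_equispaced_trigPoly hm0 a
  refine ⟨haverage, ?_⟩
  rintro ⟨c, hc⟩
  have hconst (θ : ℝ) : a (-m) * exp (-(θ * I)) + a m * exp (θ * I) = c - a 0 := by
    have hθ : I * m * ((θ / m : ℝ) : ℂ) = θ * I := by
      push_cast
      field_simp
    rw [← hc (θ / m), haverage, hθ]
    ring
  obtain ⟨hA, hB⟩ := eq_zero_of_forall_mul_exp_neg_add_mul_exp_eq hconst
  exact hdeg.elim (· hA) (· hB)
end

section
/- Let f ∈ L¹(ℝ, ℂ) be Fourier-smooth with exponent p ∈ [-1, ∞), and define g : ℝ^d → ℂ by g(x) = Π_{j=1}^d f(x_j). Then g is Fourier-smooth with exponent p - (d-1). -/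
open MeasureTheory Filter

/-- The Fourier transform `f̂(k) = ∫ e^{-ikx} f(x) dx` of a function on `ℝ`. -/
noncomputable def ft1 (f : ℝ → ℂ) (k : ℝ) : ℂ :=
  ∫ x : ℝ, Complex.exp (-(Complex.I * (k : ℂ) * (x : ℂ))) * f x

/-- The Fourier transform `f̂(k) = ∫ e^{-i⟨k,x⟩} f(x) dx` of a function on `ℝ^d`. -/
noncomputable def ftd {d : ℕ} (f : EuclideanSpace ℝ (Fin d) → ℂ)
    (k : EuclideanSpace ℝ (Fin d)) : ℂ :=
  ∫ x, Complex.exp (-(Complex.I * ((inner ℝ k x : ℝ) : ℂ))) * f x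

/-- `f ∈ L¹(ℝ, ℂ)` is Fourier-smooth with exponent `p ∈ [-1, ∞)`:
(i) `|f̂(k)| ≤ c (1+|k|)^{-(1+p)/2}`, and (ii) if `p ≤ 0`, additionally
`∫_{|k|≥2} sup_{|s|<1} |f̂(r(k+s))|² dk = O(r^{-(1+p)})` as `r → ∞`. -/
def FourierSmooth1 (f : ℝ → ℂ) (p : ℝ) : Prop :=
  Integrable f ∧
  (∃ c > (0 : ℝ), ∀ k : ℝ, ‖ft1 f k‖ ≤ c * (1 + |k|) ^ (-((1 + p) / 2))) ∧
  (p ≤ 0 → ∃ C > (0 : ℝ), ∀ᶠ r : ℝ in atTop,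
    (∫ k in {k : ℝ | 2 ≤ |k|},
        ⨆ s ∈ Metric.ball (0 : ℝ) 1, ‖ft1 f (r * (k + s))‖ ^ 2) ≤ C * r ^ (-(1 + p)))

/-- `f ∈ L¹(ℝ^d, ℂ)` is Fourier-smooth with exponent `p ∈ [-d, ∞)`:
(i) `|f̂(k)| ≤ c (1+‖k‖)^{-(d+p)/2}`, and (ii) if `p ≤ 0`, additionally
`∫_{‖k‖≥2} sup_{‖s‖<1} |f̂(r(k+s))|² dk = O(r^{-(d+p)})` as `r → ∞`. -/
def FourierSmoothD {d : ℕ} (f : EuclideanSpace ℝ (Fin d) → ℂ) (p : ℝ) : Prop :=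
  Integrable f ∧
  (∃ c > (0 : ℝ), ∀ k, ‖ftd f k‖ ≤ c * (1 + ‖k‖) ^ (-(((d : ℝ) + p) / 2))) ∧
  (p ≤ 0 → ∃ C > (0 : ℝ), ∀ᶠ r : ℝ in atTop,
    (∫ k in {k : EuclideanSpace ℝ (Fin d) | 2 ≤ ‖k‖},
        ⨆ s ∈ Metric.ball (0 : EuclideanSpace ℝ (Fin d)) 1,
          ‖ftd f (r • (k + s))‖ ^ 2) ≤ C * r ^ (-((d : ℝ) + p)))

/-!
The transform of `g` factorises, `ĝ κ = ∏ i, f̂ (κ i)`, and some coordinate of `κ` has size at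
least `‖κ‖ / √d`. Bounding that factor by the decay of `f̂` and the others by `c` gives (i) with
the unchanged exponent `(1 + p) / 2 = (d + (p - (d - 1))) / 2`.

For (ii), the supremum of `|ĝ (r (k + s))|²` over `‖s‖ < 1` is at most `∏ i, h r (k i)`, where
`h r t = sup_{|s| < 1} |f̂ (r (t + s))|²`. On `{‖k‖ ≥ 2}`, either some `|k j| ≥ 2`, and these
regions contribute at most `d (∫_{|t| ≥ 2} h r) (∫ h r)^(d-1) = O(r^(-(1+p)))`, or `k` lies in
the cube `(-2, 2)^d`, where some coordinate of `r (k + s)` has size at least `r / √d`, so that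
the integrand is `O(r^(-(1+p)))` by the decay of `f̂`. For `p > 0` the one-dimensional tail
bound follows from the decay alone. Since a non-integrable function has integral `0`, one also
needs that integrability over `{‖k‖ ≥ 2}` forces integrability of `h r` over `{|t| ≥ 2}`: by
Fubini, since on `{|k 0| ≥ 2}` the integrand dominates `h r (k 0) * ∏ i ≠ 0, |f̂ (r (k i))|²`,
whose second factor vanishes a.e. only if `f̂ = 0`.
-/

open Metric Set

section BallSup

variable {E : Type*} [SeminormedAddCommGroup E] {φ : E → ℝ} {k : E} {B : ℝ}

noncomputable def ballSup (φ : E → ℝ) (k : E) : ℝ :=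
  ⨆ s ∈ ball (0 : E) 1, φ (k + s)

lemma ballSup_nonneg (h0 : ∀ x, 0 ≤ φ x) (k : E) : 0 ≤ ballSup φ k :=
  Real.iSup_nonneg fun _ => Real.iSup_nonneg fun _ => h0 _

lemma ballSup_le (hB : 0 ≤ B) (h : ∀ s ∈ ball (0 : E) 1, φ (k + s) ≤ B) :
    ballSup φ k ≤ B :=
  Real.iSup_le (fun s => Real.iSup_le (h s) hB) hB

lemma le_ballSup (hφ : BddAbove (range φ)) {s : E} (hs : s ∈ ball (0 : E) 1) :
    φ (k + s) ≤ ballSup φ k :=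
  le_ciSup₂ (f := fun s (_ : s ∈ ball (0 : E) 1) => φ (k + s))
    (hφ.mono (iUnion_subset fun _ => range_subset_iff.2 fun _ => mem_range_self _)) s hs

lemma ballSup_mul_const {c : ℝ} (hc : 0 ≤ c) (k : E) :
    ballSup φ k * c = ballSup (fun x => φ x * c) k := by
  simp_rw [ballSup, Real.iSup_mul_of_nonneg hc]

lemma measurable_ballSup [MeasurableSpace E] [OpensMeasurableSpace E] (hφ : Continuous φ)
    (hb : BddAbove (range φ)) : Measurable (ballSup φ) := by
  refine LowerSemicontinuous.measurable (lowerSemicontinuous_ciSup (fun k => ?_) fun s => ?_)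
  · exact BddAbove.range_iSup_of_iUnion_range
      (hb.mono (iUnion_subset fun _ => range_subset_iff.2 fun _ => mem_range_self _))
  · by_cases hs : s ∈ ball (0 : E) 1
    · simp_rw [ciSup_pos hs]
      exact (hφ.comp (continuous_add_const s)).lowerSemicontinuous
    · simp_rw [ciSup_neg hs]
      exact lowerSemicontinuous_const

end BallSup

lemma prod_le_mul_pow_of_le {ι : Type*} [Fintype ι] [DecidableEq ι] {a : ι → ℝ} {A B : ℝ}
    (j : ι) (h0 : ∀ i, 0 ≤ a i) (hj : a j ≤ A) (hB : ∀ i ≠ j, a i ≤ B) :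
    ∏ i, a i ≤ A * B ^ (Fintype.card ι - 1) := by
  rw [← Finset.mul_prod_erase _ _ (Finset.mem_univ j)]
  refine mul_le_mul hj ?_ (Finset.prod_nonneg fun i _ => h0 i) ((h0 j).trans hj)
  calc ∏ i ∈ Finset.univ.erase j, a i ≤ ∏ _i ∈ Finset.univ.erase j, B :=
        Finset.prod_le_prod (fun i _ => h0 i) fun i hi => hB i (Finset.ne_of_mem_erase hi)
    _ = B ^ (Fintype.card ι - 1) := by
        rw [Finset.prod_const, Finset.card_erase_of_mem (Finset.mem_univ j), Finset.card_univ]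

section Euclidean

variable {ι : Type*} [Fintype ι]

lemma exists_norm_le_sqrt_card_mul_abs [Nonempty ι] (κ : EuclideanSpace ℝ ι) :
    ∃ j, ‖κ‖ ≤ √(Fintype.card ι) * |κ j| := by
  obtain ⟨j, -, hj⟩ :=
    Finset.exists_max_image Finset.univ (fun i => |κ i|) Finset.univ_nonempty
  refine ⟨j, ?_⟩
  rw [EuclideanSpace.norm_eq, ← Real.sqrt_sq (abs_nonneg (κ j)),
    ← Real.sqrt_mul (by positivity)]
  gcongr
  calc ∑ i, ‖κ i‖ ^ 2 ≤ ∑ _i : ι, |κ j| ^ 2 :=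
        Finset.sum_le_sum fun i _ => by
          rw [Real.norm_eq_abs]
          exact pow_le_pow_left₀ (abs_nonneg _) (hj i (Finset.mem_univ i)) 2
    _ = Fintype.card ι * |κ j| ^ 2 := by simp

lemma integrable_euclidean_prod {𝕜 : Type*} [RCLike 𝕜] {φ : ι → ℝ → 𝕜}
    (hφ : ∀ i, Integrable (φ i)) :
    Integrable fun k : EuclideanSpace ℝ ι => ∏ i, φ i (k i) :=
  ((PiLp.volume_preserving_ofLp ι).integrable_comp_emb
    (MeasurableEquiv.toLp 2 (ι → ℝ)).symm.measurableEmbedding).2 (Integrable.fintype_prod hφ)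

lemma integral_euclidean_prod {𝕜 : Type*} [RCLike 𝕜] (φ : ι → ℝ → 𝕜) :
    ∫ k : EuclideanSpace ℝ ι, ∏ i, φ i (k i) = ∏ i, ∫ t, φ i t := by
  rw [← integral_fintype_prod_volume_eq_prod, ← (PiLp.volume_preserving_ofLp ι).integral_comp
    (MeasurableEquiv.toLp 2 (ι → ℝ)).symm.measurableEmbedding]

end Euclidean

section FourierTransform

lemma norm_ft1_le (f : ℝ → ℂ) (k : ℝ) : ‖ft1 f k‖ ≤ ∫ x, ‖f x‖ :=
  (norm_integral_le_integral_norm _).trans_eq (by simp [Complex.norm_exp])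

variable {f : ℝ → ℂ}

lemma continuous_ft1 (hf : Integrable f) : Continuous (ft1 f) :=
  continuous_of_dominated (fun k => (by fun_prop : Continuous _).aestronglyMeasurable.mul
      hf.aestronglyMeasurable)
    (fun k => ae_of_all _ fun x => by simp [Complex.norm_exp]) hf.norm
    (ae_of_all _ fun x => by fun_prop)

variable {d : ℕ} {g : EuclideanSpace ℝ (Fin d) → ℂ}

lemma integrable_of_eq_prod (hf : Integrable f) (hg : ∀ x, g x = ∏ j, f (x j)) :
    Integrable g := by
  simpa only [← hg] using integrable_euclidean_prod fun _ : Fin d => hf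

lemma ftd_eq_prod (hg : ∀ x, g x = ∏ j, f (x j)) (κ : EuclideanSpace ℝ (Fin d)) :
    ftd g κ = ∏ i, ft1 f (κ i) := by
  have hkernel : ∀ x : EuclideanSpace ℝ (Fin d),
      Complex.exp (-(Complex.I * ((inner ℝ κ x : ℝ) : ℂ))) * g x =
        ∏ i, Complex.exp (-(Complex.I * (κ i : ℂ) * (x i : ℂ))) * f (x i) := by
    intro x
    simp only [hg, Finset.prod_mul_distrib, ← Complex.exp_sum, PiLp.inner_apply,
      RCLike.inner_apply, conj_trivial]
    push_cast
    rw [Finset.mul_sum, ← Finset.sum_neg_distrib]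
    exact congrArg₂ _ (congrArg _ (Finset.sum_congr rfl fun i _ => by ring)) rfl
  simp only [ftd, hkernel]
  exact integral_euclidean_prod fun i t =>
    Complex.exp (-(Complex.I * (κ i : ℂ) * (t : ℂ))) * f t

lemma ballSup_sq_norm_ftd_eq (hprod : ∀ κ, ftd g κ = ∏ i, ft1 f (κ i)) (r : ℝ) :
    ballSup (fun κ => ‖ftd g (r • κ)‖ ^ 2) =
      ballSup (fun κ : EuclideanSpace ℝ (Fin d) => ∏ i, ‖ft1 f (r * κ i)‖ ^ 2) := by
  congr 1
  funext κ
  simp [hprod, norm_prod, Finset.prod_pow]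

end FourierTransform

section ProductBallSup

variable {φ : ℝ → ℝ} {B : ℝ}

lemma ballSup_prod_le_prod_ballSup {ι : Type*} [Fintype ι] (h0 : ∀ t, 0 ≤ φ t)
    (hB : ∀ t, φ t ≤ B) (k : EuclideanSpace ℝ ι) :
    ballSup (fun κ : EuclideanSpace ℝ ι => ∏ i, φ (κ i)) k ≤ ∏ i, ballSup φ (k i) :=
  ballSup_le (Finset.prod_nonneg fun _ _ => ballSup_nonneg h0 _) fun s hs =>
    Finset.prod_le_prod (fun _ _ => h0 _) fun i _ =>
      le_ballSup ⟨B, forall_mem_range.2 hB⟩ (s := s i)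
        (mem_ball_zero_iff.2 ((PiLp.norm_apply_le s i).trans_lt (mem_ball_zero_iff.1 hs)))

lemma ballSup_mul_prod_succ_le {n : ℕ} (h0 : ∀ t, 0 ≤ φ t) (hB : ∀ t, φ t ≤ B)
    (k : EuclideanSpace ℝ (Fin (n + 1))) :
    ballSup φ (k 0) * ∏ i : Fin n, φ (k i.succ) ≤
      ballSup (fun κ : EuclideanSpace ℝ (Fin (n + 1)) => ∏ i, φ (κ i)) k := by
  have hbdd : BddAbove (range fun κ : EuclideanSpace ℝ (Fin (n + 1)) => ∏ i, φ (κ i)) :=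
    ⟨B ^ (n + 1), forall_mem_range.2 fun κ => (Finset.prod_le_prod (fun _ _ => h0 _)
      fun _ _ => hB _).trans_eq (by simp)⟩
  rw [ballSup_mul_const (Finset.prod_nonneg fun _ _ => h0 _)]
  refine ballSup_le (ballSup_nonneg (fun κ => Finset.prod_nonneg fun _ _ => h0 _) k)
    fun σ hσ => ?_
  have hs : EuclideanSpace.single 0 σ ∈ ball (0 : EuclideanSpace ℝ (Fin (n + 1))) 1 := by
    simpa using hσ
  refine le_of_eq_of_le ?_ (le_ballSup hbdd hs)
  simp [Fin.prod_univ_succ]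

lemma ballSup_prod_le_of_two_le_norm {d : ℕ} (hd : 0 < d) {A : ℝ} (h0 : ∀ t, 0 ≤ φ t)
    (hB : ∀ t, φ t ≤ B) (hA : ∀ t, 1 ≤ √d * |t| → φ t ≤ A) {k : EuclideanSpace ℝ (Fin d)}
    (hk : 2 ≤ ‖k‖) :
    ballSup (fun κ : EuclideanSpace ℝ (Fin d) => ∏ i, φ (κ i)) k ≤ A * B ^ (d - 1) := by
  have : Nonempty (Fin d) := ⟨⟨0, hd⟩⟩
  have hbound : ∀ s ∈ ball (0 : EuclideanSpace ℝ (Fin d)) 1,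
      ∏ i, φ ((k + s) i) ≤ A * B ^ (d - 1) := by
    intro s hs
    have hks : 1 ≤ ‖k + s‖ := by
      have := norm_sub_le (k + s) s
      rw [add_sub_cancel_right] at this
      linarith [mem_ball_zero_iff.1 hs]
    obtain ⟨j, hj⟩ := exists_norm_le_sqrt_card_mul_abs (k + s)
    rw [Fintype.card_fin] at hj
    simpa using prod_le_mul_pow_of_le j (fun _ => h0 _) (hA _ (hks.trans hj)) fun _ _ => hB _
  exact ballSup_le
    ((Finset.prod_nonneg fun _ _ => h0 _).trans (hbound 0 (mem_ball_self one_pos))) hbound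

end ProductBallSup

section Tail

lemma measurableSet_two_le_abs : MeasurableSet {t : ℝ | 2 ≤ |t|} :=
  measurableSet_le measurable_const measurable_abs

lemma compl_two_le_abs : {t : ℝ | 2 ≤ |t|}ᶜ = Ioo (-2) 2 := by
  ext t
  simp [abs_lt]

lemma integrable_of_integrableOn_two_le_abs {u : ℝ → ℝ} {B : ℝ} (hu : Measurable u)
    (hB : ∀ t, ‖u t‖ ≤ B) (h : IntegrableOn u {t | 2 ≤ |t|}) : Integrable u := by
  have hcompl : IntegrableOn u {t : ℝ | 2 ≤ |t|}ᶜ := by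
    rw [compl_two_le_abs]
    exact Measure.integrableOn_of_bounded (by simp) hu.aestronglyMeasurable (ae_of_all _ hB)
  simpa using h.union hcompl

lemma integral_le_setIntegral_two_le_abs_add {u : ℝ → ℝ} {B : ℝ} (hu : Measurable u)
    (h0 : ∀ t, 0 ≤ u t) (hB : ∀ t, u t ≤ B) :
    ∫ t, u t ≤ (∫ t in {t | 2 ≤ |t|}, u t) + 4 * B := by
  have hnorm : ∀ t, ‖u t‖ ≤ B := fun t => by
    rw [Real.norm_eq_abs, abs_of_nonneg (h0 t)]
    exact hB t
  by_cases h : IntegrableOn u {t | 2 ≤ |t|}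
  · have hcompl : ∫ t in {t : ℝ | 2 ≤ |t|}ᶜ, u t ≤ 4 * B := by
      refine (le_abs_self _).trans ?_
      rw [← Real.norm_eq_abs, compl_two_le_abs]
      refine (norm_setIntegral_le_of_norm_le_const (by simp) fun t _ => hnorm t).trans_eq ?_
      norm_num [mul_comm]
    rw [← integral_add_compl measurableSet_two_le_abs
      (integrable_of_integrableOn_two_le_abs hu hnorm h)]
    linarith
  · rw [integral_undef fun hu' => h hu'.integrableOn]
    linarith [(h0 0).trans (hB 0),
      setIntegral_nonneg (μ := volume) measurableSet_two_le_abs fun t _ => h0 t]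

end Tail

lemma Integrable.of_prod_mul {α β : Type*} [MeasurableSpace α] [MeasurableSpace β]
    {μ : Measure α} {ν : Measure β} [SFinite μ] [SFinite ν] {a : α → ℝ} {b : β → ℝ}
    (h : Integrable (fun z : α × β => a z.1 * b z.2) (μ.prod ν)) (hb : ¬ b =ᵐ[ν] 0) :
    Integrable a μ := by
  obtain ⟨y, hy, hby⟩ := (((integrable_prod_iff' h.aestronglyMeasurable).1 h).1.and_frequently
    (Filter.not_eventually.1 hb)).exists
  simpa [mul_assoc, mul_inv_cancel₀ hby] using hy.mul_const (b y)⁻¹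

lemma integrable_comp_toLp_cons {n : ℕ} {F : EuclideanSpace ℝ (Fin (n + 1)) → ℝ}
    (hF : Integrable F) :
    Integrable (fun z : ℝ × (Fin n → ℝ) => F (WithLp.toLp 2 (Fin.cons z.1 z.2)))
      (volume.prod volume) := by
  let e := (MeasurableEquiv.piFinSuccAbove (fun _ : Fin (n + 1) => ℝ) 0).symm.trans
    (MeasurableEquiv.toLp 2 (Fin (n + 1) → ℝ))
  have he : MeasurePreserving e (volume.prod volume) volume :=
    (EuclideanSpace.volume_preserving_symm_measurableEquiv_toLp _).symm.comp
      (measurePreserving_piFinSuccAbove (fun _ : Fin (n + 1) => (volume : Measure ℝ)) 0).symm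
  convert (he.integrable_comp_emb e.measurableEmbedding).2 hF using 2 with z
  simp [e, MeasurableEquiv.piFinSuccAbove_symm_apply, Fin.insertNthEquiv]

lemma norm_indicator_ballSup_mul_prod_succ_le {n : ℕ} {φ : ℝ → ℝ} {B : ℝ}
    (h0 : ∀ t, 0 ≤ φ t) (hB : ∀ t, φ t ≤ B) (k : EuclideanSpace ℝ (Fin (n + 1))) :
    ‖{t : ℝ | 2 ≤ |t|}.indicator (ballSup φ) (k 0) * ∏ i : Fin n, φ (k i.succ)‖ ≤
      {k | 2 ≤ ‖k‖}.indicator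
        (ballSup fun κ : EuclideanSpace ℝ (Fin (n + 1)) => ∏ i, φ (κ i)) k := by
  by_cases hk : 2 ≤ |k 0|
  · rw [Real.norm_eq_abs, abs_of_nonneg (mul_nonneg
        (indicator_nonneg (fun t _ => ballSup_nonneg h0 t) _)
        (Finset.prod_nonneg fun _ _ => h0 _)),
      indicator_of_mem (show k ∈ {k : EuclideanSpace ℝ (Fin (n + 1)) | 2 ≤ ‖k‖} from
        hk.trans (PiLp.norm_apply_le k 0)),
      indicator_of_mem (show k 0 ∈ {t : ℝ | 2 ≤ |t|} from hk)]
    exact ballSup_mul_prod_succ_le h0 hB k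
  · rw [indicator_of_notMem (show k 0 ∉ {t : ℝ | 2 ≤ |t|} from hk), zero_mul, norm_zero]
    exact indicator_nonneg (fun k _ =>
      ballSup_nonneg (fun κ => Finset.prod_nonneg fun _ _ => h0 _) k) k

lemma integrableOn_ballSup_of_integrableOn_ballSup_prod {d : ℕ} (hd : 0 < d) {φ : ℝ → ℝ}
    {B : ℝ} (hφ : Continuous φ) (h0 : ∀ t, 0 ≤ φ t) (hB : ∀ t, φ t ≤ B)
    (h : IntegrableOn (ballSup fun κ : EuclideanSpace ℝ (Fin d) => ∏ i, φ (κ i))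
      {k | 2 ≤ ‖k‖}) :
    IntegrableOn (ballSup φ) {t : ℝ | 2 ≤ |t|} := by
  obtain ⟨n, rfl⟩ := Nat.exists_eq_succ_of_ne_zero hd.ne'
  by_cases hφ0 : φ = 0
  · have : ballSup (0 : ℝ → ℝ) = 0 := funext fun k => by simp [ballSup]
    rw [hφ0, this]
    exact (integrable_zero _ _ _).integrableOn
  set a := {t : ℝ | 2 ≤ |t|}.indicator (ballSup φ)
  have ha : Measurable a :=
    (measurable_ballSup hφ ⟨B, forall_mem_range.2 hB⟩).indicator measurableSet_two_le_abs
  have hb : ¬ (fun y : Fin n → ℝ => ∏ i, φ (y i)) =ᵐ[volume] 0 := by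
    intro hb0
    obtain ⟨t₀, ht₀⟩ := Function.ne_iff.1 hφ0
    have := congrFun (((continuous_finsetProd _ fun i _ => hφ.comp (continuous_apply i)
      ).ae_eq_iff_eq volume continuous_zero).1 hb0) fun _ => t₀
    simp only [Function.comp_apply, Finset.prod_const, Finset.card_univ, Fintype.card_fin,
      Pi.zero_apply, pow_eq_zero_iff', ne_eq] at this
    exact ht₀ this.1
  have hG : Integrable fun k : EuclideanSpace ℝ (Fin (n + 1)) =>
      a (k 0) * ∏ i : Fin n, φ (k i.succ) :=
    ((integrable_indicator_iff (measurableSet_le measurable_const measurable_norm)).2 h).mono'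
      ((ha.comp (by fun_prop : Continuous fun k : EuclideanSpace ℝ (Fin (n + 1)) =>
        k 0).measurable).mul (by fun_prop : Continuous fun k : EuclideanSpace ℝ (Fin (n + 1)) =>
          ∏ i : Fin n, φ (k i.succ)).measurable).aestronglyMeasurable
      (ae_of_all _ (norm_indicator_ballSup_mul_prod_succ_le h0 hB))
  have hsplit : Integrable (fun z : ℝ × (Fin n → ℝ) => a z.1 * ∏ i, φ (z.2 i))
      (volume.prod volume) := by
    simpa using integrable_comp_toLp_cons hG
  exact (integrable_indicator_iff measurableSet_two_le_abs).1 (Integrable.of_prod_mul hsplit hb)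

section TailCut

variable {ι : Type*} [DecidableEq ι] {u : ℝ → ℝ}

noncomputable def tailCut (u : ℝ → ℝ) (j i : ι) : ℝ → ℝ :=
  if i = j then {t | 2 ≤ |t|}.indicator u else u

lemma tailCut_nonneg (hu0 : ∀ t, 0 ≤ u t) (j i : ι) (t : ℝ) : 0 ≤ tailCut u j i t := by
  unfold tailCut
  split_ifs
  exacts [indicator_nonneg (fun t _ => hu0 t) t, hu0 t]

lemma integrable_tailCut (hu : Integrable u) (j i : ι) : Integrable (tailCut u j i) := by
  unfold tailCut
  split_ifs
  exacts [hu.indicator measurableSet_two_le_abs, hu]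

lemma prod_tailCut_eq [Fintype ι] {k : EuclideanSpace ℝ ι} {j : ι} (hj : 2 ≤ |k j|) :
    ∏ i, tailCut u j i (k i) = ∏ i, u (k i) :=
  Finset.prod_congr rfl fun i _ => by
    by_cases hij : i = j
    · subst hij
      simp [tailCut, indicator_of_mem (show k i ∈ {t : ℝ | 2 ≤ |t|} from hj)]
    · simp [tailCut, hij]

lemma integral_euclidean_prod_tailCut_le [Fintype ι] (hu0 : ∀ t, 0 ≤ u t) (j : ι) :
    ∫ k : EuclideanSpace ℝ ι, ∏ i, tailCut u j i (k i) ≤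
      (∫ t in {t | 2 ≤ |t|}, u t) * (∫ t, u t) ^ (Fintype.card ι - 1) := by
  rw [integral_euclidean_prod]
  refine prod_le_mul_pow_of_le j (fun i => integral_nonneg (tailCut_nonneg hu0 j i)) ?_
    fun i hij => by simp [tailCut, hij]
  simp [tailCut, integral_indicator measurableSet_two_le_abs]

end TailCut

lemma integral_euclidean_prod_indicator_Ioo {ι : Type*} [Fintype ι] :
    ∫ k : EuclideanSpace ℝ ι, ∏ i, (Ioo (-2 : ℝ) 2).indicator (1 : ℝ → ℝ) (k i) =
      4 ^ Fintype.card ι := by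
  rw [integral_euclidean_prod, Finset.prod_const, integral_indicator_one measurableSet_Ioo,
    Real.volume_real_Ioo, Finset.card_univ]
  norm_num

lemma setIntegral_two_le_norm_le_of_le_prod {d : ℕ} {u : ℝ → ℝ}
    {H : EuclideanSpace ℝ (Fin d) → ℝ} {D : ℝ} (hu0 : ∀ t, 0 ≤ u t) (hu : Integrable u)
    (hH0 : ∀ k, 0 ≤ H k) (hHu : ∀ k, H k ≤ ∏ i, u (k i)) (hHD : ∀ k, 2 ≤ ‖k‖ → H k ≤ D)
    (hD : 0 ≤ D) :
    ∫ k in {k | 2 ≤ ‖k‖}, H k ≤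
      d * ((∫ t in {t | 2 ≤ |t|}, u t) * (∫ t, u t) ^ (d - 1)) + 4 ^ d * D := by
  let cube : EuclideanSpace ℝ (Fin d) → ℝ := fun k =>
    ∏ i, (Ioo (-2 : ℝ) 2).indicator (1 : ℝ → ℝ) (k i)
  let majorant : EuclideanSpace ℝ (Fin d) → ℝ := fun k =>
    ∑ j, ∏ i, tailCut u j i (k i) + D * cube k
  have hcube0 : ∀ k, 0 ≤ cube k := fun k =>
    Finset.prod_nonneg fun _ _ => indicator_nonneg (fun _ _ => zero_le_one) _
  have hsum0 : ∀ k : EuclideanSpace ℝ (Fin d), 0 ≤ ∑ j, ∏ i, tailCut u j i (k i) := fun k =>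
    Finset.sum_nonneg fun j _ => Finset.prod_nonneg fun i _ => tailCut_nonneg hu0 j i _
  have hsum : Integrable fun k : EuclideanSpace ℝ (Fin d) => ∑ j, ∏ i, tailCut u j i (k i) :=
    integrable_finsetSum _ fun j _ => integrable_euclidean_prod (integrable_tailCut hu j)
  have hcube : Integrable fun k => D * cube k :=
    (integrable_euclidean_prod fun _ => (integrable_indicator_iff measurableSet_Ioo).2
      (integrableOn_const (by simp))).const_mul D
  have hle : ∀ k, 2 ≤ ‖k‖ → H k ≤ majorant k := by
    intro k hk
    by_cases hin : ∀ i, k i ∈ Ioo (-2) 2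
    · have : cube k = 1 := Finset.prod_eq_one fun i _ => by simp [hin i]
      simpa [majorant, this] using add_le_add (hsum0 k) (hHD k hk)
    · obtain ⟨j, hj⟩ := not_forall.1 hin
      have hj' : 2 ≤ |k j| := not_lt.1 fun hlt => hj (abs_lt.1 hlt)
      have : cube k = 0 := Finset.prod_eq_zero (Finset.mem_univ j) (by simp [hj])
      simpa [majorant, this] using ((hHu k).trans_eq (prod_tailCut_eq hj').symm).trans
        (Finset.single_le_sum (f := fun j => ∏ i, tailCut u j i (k i))
          (fun j _ => Finset.prod_nonneg fun i _ => tailCut_nonneg hu0 j i _) (Finset.mem_univ j))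
  have hintegral : ∫ k, majorant k ≤
      d * ((∫ t in {t | 2 ≤ |t|}, u t) * (∫ t, u t) ^ (d - 1)) + 4 ^ d * D := by
    rw [integral_add hsum hcube, integral_const_mul, integral_finsetSum _ fun j _ =>
      integrable_euclidean_prod (integrable_tailCut hu j), integral_euclidean_prod_indicator_Ioo,
      Fintype.card_fin, mul_comm D]
    gcongr
    simpa using Finset.sum_le_sum fun (j : Fin d) (_ : j ∈ Finset.univ) =>
      integral_euclidean_prod_tailCut_le hu0 j
  calc ∫ k in {k | 2 ≤ ‖k‖}, H k ≤ ∫ k in {k | 2 ≤ ‖k‖}, majorant k :=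
        integral_mono_of_nonneg (ae_of_all _ hH0) (hsum.add hcube).integrableOn
          ((ae_restrict_iff' (measurableSet_le measurable_const measurable_norm)).2
            (ae_of_all _ hle))
    _ ≤ ∫ k, majorant k := setIntegral_le_integral (hsum.add hcube)
        (ae_of_all _ fun k => add_nonneg (hsum0 k) (mul_nonneg hD (hcube0 k)))
    _ ≤ _ := hintegral

lemma setIntegral_ballSup_prod_le {d : ℕ} (hd : 0 < d) {φ : ℝ → ℝ} {A B : ℝ}
    (hφ : Continuous φ) (h0 : ∀ t, 0 ≤ φ t) (hB : ∀ t, φ t ≤ B)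
    (hA : ∀ t, 1 ≤ √d * |t| → φ t ≤ A) :
    ∫ k in {k | 2 ≤ ‖k‖}, ballSup (fun κ : EuclideanSpace ℝ (Fin d) => ∏ i, φ (κ i)) k ≤
      d * ((∫ t in {t | 2 ≤ |t|}, ballSup φ t) * (∫ t, ballSup φ t) ^ (d - 1)) +
        4 ^ d * (A * B ^ (d - 1)) := by
  have hB0 : 0 ≤ B := (h0 0).trans (hB 0)
  have hA0 : 0 ≤ A :=
    (h0 1).trans (hA 1 (by simpa using Real.one_le_sqrt.2 (Nat.one_le_cast.2 hd)))
  by_cases hH : IntegrableOn (ballSup fun κ : EuclideanSpace ℝ (Fin d) => ∏ i, φ (κ i))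
    {k | 2 ≤ ‖k‖}
  · have hnorm : ∀ t, ‖ballSup φ t‖ ≤ B := fun t => by
      rw [Real.norm_eq_abs, abs_of_nonneg (ballSup_nonneg h0 t)]
      exact ballSup_le hB0 fun s _ => hB _
    refine setIntegral_two_le_norm_le_of_le_prod (ballSup_nonneg h0)
      (integrable_of_integrableOn_two_le_abs (measurable_ballSup hφ ⟨B, forall_mem_range.2 hB⟩)
        hnorm (integrableOn_ballSup_of_integrableOn_ballSup_prod hd hφ h0 hB hH))
      (ballSup_nonneg fun κ => Finset.prod_nonneg fun _ _ => h0 _)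
      (ballSup_prod_le_prod_ballSup h0 hB)
      (fun k hk => ballSup_prod_le_of_two_le_norm hd h0 hB hA hk) (by positivity)
  · rw [integral_undef hH]
    have := integral_nonneg (μ := volume) (f := ballSup φ) (ballSup_nonneg h0)
    have := setIntegral_nonneg (μ := volume) measurableSet_two_le_abs fun t _ =>
      ballSup_nonneg h0 t
    positivity

section Decay

variable {F : ℝ → ℂ} {c q : ℝ}

lemma sq_norm_le_of_decay (hc : 0 ≤ c) (hq : 0 ≤ q)
    (hF : ∀ t, ‖F t‖ ≤ c * (1 + |t|) ^ (-(q / 2))) {t x : ℝ} (hx : 0 < x)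
    (hxt : x ≤ 1 + |t|) :
    ‖F t‖ ^ 2 ≤ c ^ 2 * x ^ (-q) := by
  have h : ‖F t‖ ≤ c * x ^ (-(q / 2)) := (hF t).trans
    (mul_le_mul_of_nonneg_left (Real.rpow_le_rpow_of_nonpos hx hxt (by linarith)) hc)
  calc ‖F t‖ ^ 2 ≤ (c * x ^ (-(q / 2))) ^ 2 := pow_le_pow_left₀ (norm_nonneg _) h 2
    _ = c ^ 2 * x ^ (-q) := by
      rw [mul_pow, ← Real.rpow_natCast (x ^ _), ← Real.rpow_mul hx.le]
      norm_num

lemma sq_norm_mul_le_of_decay (hc : 0 ≤ c) (hq : 0 ≤ q)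
    (hF : ∀ t, ‖F t‖ ≤ c * (1 + |t|) ^ (-(q / 2))) {a r t : ℝ} (ha : 0 < a) (hr : 0 < r)
    (ht : 1 ≤ a * |t|) :
    ‖F (r * t)‖ ^ 2 ≤ c ^ 2 * a ^ q * r ^ (-q) := by
  refine (sq_norm_le_of_decay hc hq hF (x := r / a) (by positivity) ?_).trans_eq ?_
  · rw [abs_mul, abs_of_pos hr, div_le_iff₀ ha]
    nlinarith [abs_nonneg t]
  · rw [Real.div_rpow hr.le ha.le, Real.rpow_neg hr.le, Real.rpow_neg ha.le]
    field_simp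

lemma prod_norm_le_of_decay {d : ℕ} (hd : 0 < d) {e : ℝ} (hc : 0 ≤ c) (he : 0 ≤ e)
    (hF : ∀ t, ‖F t‖ ≤ c * (1 + |t|) ^ (-e)) (κ : EuclideanSpace ℝ (Fin d)) :
    ∏ i, ‖F (κ i)‖ ≤ c ^ d * √d ^ e * (1 + ‖κ‖) ^ (-e) := by
  have : Nonempty (Fin d) := ⟨⟨0, hd⟩⟩
  have hsd : 1 ≤ √d := Real.one_le_sqrt.2 (Nat.one_le_cast.2 hd)
  obtain ⟨j, hj⟩ := exists_norm_le_sqrt_card_mul_abs κ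
  rw [Fintype.card_fin] at hj
  have hκj : (1 + ‖κ‖) / √d ≤ 1 + |κ j| := by
    rw [div_le_iff₀ (by positivity)]
    nlinarith [abs_nonneg (κ j)]
  have hj' : ‖F (κ j)‖ ≤ c * (√d ^ e * (1 + ‖κ‖) ^ (-e)) := by
    refine (hF _).trans (mul_le_mul_of_nonneg_left
      ((Real.rpow_le_rpow_of_nonpos (by positivity) hκj (by linarith)).trans_eq ?_) hc)
    rw [Real.div_rpow (by positivity) (by positivity), Real.rpow_neg (by positivity),
      Real.rpow_neg (by positivity)]
    field_simp
  have hi : ∀ i, ‖F (κ i)‖ ≤ c := fun i => (hF _).trans (mul_le_of_le_one_right hc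
    (Real.rpow_le_one_of_one_le_of_nonpos (by linarith [abs_nonneg (κ i)]) (by linarith)))
  calc ∏ i, ‖F (κ i)‖ ≤ c * (√d ^ e * (1 + ‖κ‖) ^ (-e)) * c ^ (d - 1) := by
        simpa using prod_le_mul_pow_of_le (a := fun i => ‖F (κ i)‖) j
          (fun _ => norm_nonneg _) hj' fun i _ => hi i
    _ = _ := by
        rw [show c ^ d = c * c ^ (d - 1) by rw [← pow_succ', Nat.sub_add_cancel hd]]
        ring

lemma setIntegral_ballSup_le_of_decay (hc : 0 ≤ c) (hq : 1 < q)
    (hF : ∀ t, ‖F t‖ ≤ c * (1 + |t|) ^ (-(q / 2))) {r : ℝ} (hr : 0 < r) :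
    ∫ k in {t : ℝ | 2 ≤ |t|}, ballSup (fun t => ‖F (r * t)‖ ^ 2) k ≤
      c ^ 2 * 3 ^ q * (∫ t : ℝ, (1 + |t|) ^ (-q)) * r ^ (-q) := by
  have hJ : Integrable fun t : ℝ => (1 + |t|) ^ (-q) := by
    simpa using integrable_one_add_norm (E := ℝ) (r := q) (by simpa using hq)
  have hbound : ∀ k ∈ {t : ℝ | 2 ≤ |t|}, ballSup (fun t => ‖F (r * t)‖ ^ 2) k ≤
      c ^ 2 * 3 ^ q * r ^ (-q) * (1 + |k|) ^ (-q) := by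
    intro k hk
    refine ballSup_le (by positivity) fun s hs => (sq_norm_le_of_decay hc (by linarith) hF
      (x := r * (1 + |k|) / 3) (by positivity) ?_).trans_eq ?_
    · have hk' : 2 ≤ |k| := hk
      have hks : |k| - 1 ≤ |k + s| := by
        have := abs_add_le (k + s) (-s)
        rw [abs_neg, add_neg_cancel_right] at this
        linarith [show |s| < 1 by simpa using hs]
      rw [abs_mul, abs_of_pos hr]
      nlinarith
    · rw [Real.div_rpow (by positivity) (by norm_num), Real.mul_rpow hr.le (by positivity),
        Real.rpow_neg (by norm_num : (0 : ℝ) ≤ 3)]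
      field_simp
  calc ∫ k in {t : ℝ | 2 ≤ |t|}, ballSup (fun t => ‖F (r * t)‖ ^ 2) k
      ≤ ∫ k in {t : ℝ | 2 ≤ |t|}, c ^ 2 * 3 ^ q * r ^ (-q) * (1 + |k|) ^ (-q) :=
        integral_mono_of_nonneg (ae_of_all _ (ballSup_nonneg fun _ => sq_nonneg _))
          (hJ.const_mul _).integrableOn ((ae_restrict_iff' measurableSet_two_le_abs).2
            (ae_of_all _ hbound))
    _ ≤ ∫ k, c ^ 2 * 3 ^ q * r ^ (-q) * (1 + |k|) ^ (-q) :=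
        setIntegral_le_integral (hJ.const_mul _) (ae_of_all _ fun k => by positivity)
    _ = _ := by rw [integral_const_mul]; ring

end Decay

lemma exists_setIntegral_ballSup_ftd_le {d : ℕ} (hd : 0 < d) {f : ℝ → ℂ} (hf : Integrable f)
    {g : EuclideanSpace ℝ (Fin d) → ℂ} (hprod : ∀ κ, ftd g κ = ∏ i, ft1 f (κ i)) {c p C : ℝ}
    (hc : 0 ≤ c) (hp : -1 ≤ p) (hdecay : ∀ t, ‖ft1 f t‖ ≤ c * (1 + |t|) ^ (-((1 + p) / 2)))
    (hC : 0 < C) (htail : ∀ᶠ r : ℝ in atTop, ∫ k in {k : ℝ | 2 ≤ |k|},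
      ballSup (fun t => ‖ft1 f (r * t)‖ ^ 2) k ≤ C * r ^ (-(1 + p))) :
    ∃ C' > 0, ∀ᶠ r : ℝ in atTop, ∫ k in {k : EuclideanSpace ℝ (Fin d) | 2 ≤ ‖k‖},
      ballSup (fun κ => ‖ftd g (r • κ)‖ ^ 2) k ≤ C' * r ^ (-(1 + p)) := by
  set B := (∫ x, ‖f x‖) ^ 2
  set q := 1 + p
  have hB0 : 0 ≤ B := by positivity
  refine ⟨d * C * (C + 4 * B) ^ (d - 1) + 4 ^ d * (c ^ 2 * √d ^ q * B ^ (d - 1)),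
    by positivity, ?_⟩
  filter_upwards [htail, eventually_ge_atTop 1] with r hT hr
  have hr0 : 0 < r := by linarith
  set φ := fun t => ‖ft1 f (r * t)‖ ^ 2
  have hφ : Continuous φ := by
    have := continuous_ft1 hf
    fun_prop
  have hB : ∀ t, φ t ≤ B := fun t => pow_le_pow_left₀ (norm_nonneg _) (norm_ft1_le f _) 2
  have hA : ∀ t, 1 ≤ √d * |t| → φ t ≤ c ^ 2 * √d ^ q * r ^ (-q) := fun t =>
    sq_norm_mul_le_of_decay hc (by linarith) hdecay (Real.sqrt_pos.2 (by exact_mod_cast hd)) hr0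
  have hS0 : 0 ≤ ∫ t, ballSup φ t := integral_nonneg (ballSup_nonneg fun _ => sq_nonneg _)
  have hrq : r ^ (-q) ≤ 1 := Real.rpow_le_one_of_one_le_of_nonpos hr (by linarith)
  have hS : ∫ t, ballSup φ t ≤ C + 4 * B :=
    (integral_le_setIntegral_two_le_abs_add (measurable_ballSup hφ ⟨B, forall_mem_range.2 hB⟩)
      (ballSup_nonneg fun _ => sq_nonneg _) fun t => ballSup_le hB0 fun s _ => hB _).trans
      (by nlinarith)
  rw [ballSup_sq_norm_ftd_eq hprod]
  calc _ ≤ d * ((∫ t in {t : ℝ | 2 ≤ |t|}, ballSup φ t) * (∫ t, ballSup φ t) ^ (d - 1)) +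
        4 ^ d * (c ^ 2 * √d ^ q * r ^ (-q) * B ^ (d - 1)) :=
        setIntegral_ballSup_prod_le hd hφ (fun _ => sq_nonneg _) hB hA
    _ ≤ d * ((C * r ^ (-q)) * (C + 4 * B) ^ (d - 1)) +
        4 ^ d * (c ^ 2 * √d ^ q * r ^ (-q) * B ^ (d - 1)) := by gcongr
    _ = _ := by ring

/-- If `f ∈ L¹(ℝ, ℂ)` is Fourier-smooth with exponent `p ∈ [-1, ∞)` and
`g(x) = ∏_{j=1}^d f(x_j)`, then `g` is Fourier-smooth with exponent `p - (d - 1)`. -/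
theorem stmt11 {d : ℕ} (hd : 0 < d) (f : ℝ → ℂ) (p : ℝ) (hp : -1 ≤ p)
    (hf : FourierSmooth1 f p) (g : EuclideanSpace ℝ (Fin d) → ℂ)
    (hg : ∀ x, g x = ∏ j : Fin d, f (x j)) :
    FourierSmoothD g (p - ((d : ℝ) - 1)) := by
  obtain ⟨hfint, ⟨c, hc, hdecay⟩, htail⟩ := hf
  have hprod : ∀ κ, ftd g κ = ∏ i, ft1 f (κ i) := ftd_eq_prod hg
  have hexp : (d : ℝ) + (p - ((d : ℝ) - 1)) = 1 + p := by ring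
  refine ⟨integrable_of_eq_prod hfint hg,
    ⟨c ^ d * √d ^ ((1 + p) / 2), by positivity, fun κ => ?_⟩, fun _ => ?_⟩
  · rw [hexp, hprod, norm_prod]
    exact prod_norm_le_of_decay hd hc.le (by linarith) hdecay κ
  · obtain ⟨C, hC, hT⟩ : ∃ C > 0, ∀ᶠ r : ℝ in atTop, ∫ k in {k : ℝ | 2 ≤ |k|},
        ballSup (fun t => ‖ft1 f (r * t)‖ ^ 2) k ≤ C * r ^ (-(1 + p)) := by
      rcases le_or_gt p 0 with hp0 | hp0
      · exact htail hp0
      · refine ⟨c ^ 2 * 3 ^ (1 + p) * (∫ t : ℝ, (1 + |t|) ^ (-(1 + p))) + 1, by positivity,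
          (eventually_gt_atTop 0).mono fun r hr => ?_⟩
        refine (setIntegral_ballSup_le_of_decay hc.le (by linarith) hdecay hr).trans ?_
        gcongr
        linarith
    rw [hexp]
    exact exists_setIntegral_ballSup_ftd_le hd hfint hprod hc.le hp hdecay hC hT
end

section
/- For every m ∈ ℕ there exists n₀ such that for all n ≥ n₀ there is no averaging set of order 1 and size n' ≤ m of the set B_{n,1} = [0, 1 - 1/n] ∪ [n, n + 1/n] ⊂ ℝ with points required to lie in B_{n,1}. Quantitatively: if x₁,...,x_k ∈ B_{n,1} satisfy (1/k)Σ x_j = (1/λ(B_{n,1}))∫_{B_{n,1}} x dx, then k ≥ (2/3)·n. -/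
open MeasureTheory Set

/-- The set `B_{n,1} = [0, 1 - 1/n] ∪ [n, n + 1/n] ⊂ ℝ`. -/
noncomputable def Bset1 (n : ℕ) : Set ℝ :=
  Set.Icc 0 (1 - 1 / (n : ℝ)) ∪ Set.Icc (n : ℝ) ((n : ℝ) + 1 / (n : ℝ))

/-!
The mean of `B_{n,1}` is `3/2 - 1/n + 1/n²`, which exceeds `1 - 1/n`. Since every point of
`B_{n,1}` is either at most `1 - 1/n` or at least `n`, an averaging set must contain a point
`≥ n`; all points being nonnegative, `n ≤ ∑ xⱼ = k · mean ≤ (3/2) k`.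
-/

theorem le_sum_of_card_mul_lt_sum {ι : Type*} [Fintype ι] {x : ι → ℝ} {a b : ℝ}
    (hx₀ : ∀ i, 0 ≤ x i) (hgap : ∀ i, x i ≤ a ∨ b ≤ x i)
    (hsum : Fintype.card ι * a < ∑ i, x i) : b ≤ ∑ i, x i := by
  by_contra! hlt
  have hle : ∀ i, x i ≤ a := fun i =>
    (hgap i).resolve_right fun hb =>
      hlt.not_ge (hb.trans (Finset.single_le_sum (fun j _ => hx₀ j) (Finset.mem_univ i)))
  have := Finset.sum_le_sum fun i (_ : i ∈ Finset.univ) => hle i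
  simp only [Finset.sum_const, Finset.card_univ, nsmul_eq_mul] at this
  linarith

theorem integral_Icc_id {a b : ℝ} (hab : a ≤ b) : ∫ t in Icc a b, t = (b ^ 2 - a ^ 2) / 2 := by
  rw [integral_Icc_eq_integral_Ioc, ← intervalIntegral.integral_of_le hab, integral_id]

namespace Bset1

variable {n : ℕ}

theorem nonneg {x : ℝ} (hx : x ∈ Bset1 n) : 0 ≤ x := by
  rcases hx with hx | hx
  · exact hx.1
  · exact (Nat.cast_nonneg n).trans hx.1

theorem le_or_ge {x : ℝ} (hx : x ∈ Bset1 n) : x ≤ 1 - 1 / (n : ℝ) ∨ (n : ℝ) ≤ x :=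
  hx.imp And.right And.left

theorem disjoint (hn : 1 ≤ n) :
    Disjoint (Icc (0 : ℝ) (1 - 1 / (n : ℝ))) (Icc (n : ℝ) ((n : ℝ) + 1 / (n : ℝ))) := by
  have : (1 : ℝ) ≤ n := by exact_mod_cast hn
  have : (0 : ℝ) < 1 / n := by positivity
  exact disjoint_left.2 fun t ht ht' => by linarith [ht.2, ht'.1]

theorem one_div_le_one (hn : 1 ≤ n) : 1 / (n : ℝ) ≤ 1 :=
  div_le_one_of_le₀ (by exact_mod_cast hn) (Nat.cast_nonneg n)

theorem volume_toReal (hn : 1 ≤ n) : (volume (Bset1 n)).toReal = 1 := by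
  have := one_div_le_one hn
  have : (0 : ℝ) ≤ 1 / n := by positivity
  rw [Bset1, measure_union (disjoint hn) measurableSet_Icc, Real.volume_Icc, Real.volume_Icc,
    ENNReal.toReal_add ENNReal.ofReal_ne_top ENNReal.ofReal_ne_top,
    ENNReal.toReal_ofReal (by linarith), ENNReal.toReal_ofReal (by linarith)]
  ring

theorem integral_id (hn : 1 ≤ n) :
    ∫ t in Bset1 n, t = 3 / 2 - 1 / (n : ℝ) + 1 / (n : ℝ) ^ 2 := by
  have := one_div_le_one hn
  have hn₀ : (n : ℝ) ≠ 0 := Nat.cast_ne_zero.2 (by omega)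
  rw [Bset1, setIntegral_union (disjoint hn) measurableSet_Icc
    continuous_id'.integrableOn_Icc continuous_id'.integrableOn_Icc,
    integral_Icc_id (by linarith), integral_Icc_id (le_add_of_nonneg_right (by positivity))]
  field_simp
  ring

theorem mean (hn : 1 ≤ n) :
    (volume (Bset1 n)).toReal⁻¹ * ∫ t in Bset1 n, t = 3 / 2 - 1 / (n : ℝ) + 1 / (n : ℝ) ^ 2 := by
  rw [volume_toReal hn, integral_id hn, inv_one, one_mul]

theorem two_thirds_mul_le_card (hn : 1 ≤ n) {k : ℕ} {x : Fin k → ℝ} (hk : 0 < k)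
    (hx : ∀ j, x j ∈ Bset1 n)
    (hmean : (k : ℝ)⁻¹ * ∑ j, x j = (volume (Bset1 n)).toReal⁻¹ * ∫ t in Bset1 n, t) :
    (2 / 3 : ℝ) * n ≤ k := by
  have hμ_gt : 1 - 1 / (n : ℝ) < 3 / 2 - 1 / (n : ℝ) + 1 / (n : ℝ) ^ 2 := by
    have : (0 : ℝ) < 1 / (n : ℝ) ^ 2 := by positivity
    linarith
  have hμ_le : 3 / 2 - 1 / (n : ℝ) + 1 / (n : ℝ) ^ 2 ≤ 3 / 2 := by
    have : 1 / (n : ℝ) ^ 2 ≤ 1 / n := by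
      rw [sq, ← one_div_mul_one_div]
      exact mul_le_of_le_one_left (by positivity) (one_div_le_one hn)
    linarith
  rw [mean hn] at hmean
  set μ : ℝ := 3 / 2 - 1 / (n : ℝ) + 1 / (n : ℝ) ^ 2
  have hk' : (0 : ℝ) < k := by exact_mod_cast hk
  have hsum : ∑ j, x j = k * μ := (inv_mul_eq_iff_eq_mul₀ hk'.ne').1 hmean
  have hn_le : (n : ℝ) ≤ k * μ := hsum ▸
    le_sum_of_card_mul_lt_sum (fun j => nonneg (hx j)) (fun j => le_or_ge (hx j))
      (by rw [Fintype.card_fin, hsum]; exact mul_lt_mul_of_pos_left hμ_gt hk')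
  linarith [mul_le_mul_of_nonneg_left hμ_le hk'.le]

end Bset1

/-- For every `m` there is `n₀` such that for all `n ≥ n₀` there is no
averaging set of order 1 of `B_{n,1}` of size `≤ m` with points in `B_{n,1}`.
Quantitatively: if `x₁,…,x_k ∈ B_{n,1}` have mean equal to the normalized first moment of
`B_{n,1}`, then `k ≥ (2/3)·n`. -/
theorem stmt14 :
    (∀ m : ℕ, ∃ n₀ : ℕ, ∀ n : ℕ, n₀ ≤ n →
      ¬ ∃ (k : ℕ) (x : Fin k → ℝ), 0 < k ∧ k ≤ m ∧ (∀ j, x j ∈ Bset1 n) ∧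
        (k : ℝ)⁻¹ * ∑ j, x j =
          (volume (Bset1 n)).toReal⁻¹ * ∫ t in Bset1 n, t) ∧
    (∀ n : ℕ, 1 ≤ n → ∀ (k : ℕ) (x : Fin k → ℝ), 0 < k →
      (∀ j, x j ∈ Bset1 n) →
      (k : ℝ)⁻¹ * ∑ j, x j = (volume (Bset1 n)).toReal⁻¹ * ∫ t in Bset1 n, t →
      (2 / 3 : ℝ) * n ≤ k) := by
  refine ⟨fun m => ⟨2 * m + 1, fun n hn => ?_⟩,
    fun n hn k x hk hx hmean => Bset1.two_thirds_mul_le_card hn hk hx hmean⟩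
  rintro ⟨k, x, hk, hkm, hx, hmean⟩
  have hbound := Bset1.two_thirds_mul_le_card (by omega) hk hx hmean
  have hn' : (2 * m + 1 : ℝ) ≤ n := by exact_mod_cast hn
  have hkm' : (k : ℝ) ≤ m := by exact_mod_cast hkm
  linarith
end

section
/- For every m ∈ ℕ there exists n₀ such that for all n ≥ n₀ there is no averaging set of order 3 and size k ≤ m of B_{n,2} = [0, 1 - n^{-2}] ∪ [n, n + n^{-2}] ⊂ ℝ even allowing points anywhere in ℝ. Quantitatively: if x₁,...,x_k ∈ ℝ satisfy (1/k)Σ x_j^q = ∫_{B_{n,2}} x^q dx for q = 0,1,2,3 (note λ(B_{n,2}) = 1), then k ≥ (3/7)·n^{2/3}. -/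
/-!
Matching the moments of `B_{n,2}`: its third moment is at least `n`, since the short interval
`[n, n + n⁻²]` alone contributes about `n³ · n⁻²`, while its second moment is at most `7/3`.
So some point satisfies `x_j³ ≥ n`, whence `n^{2/3} ≤ x_j² ≤ ∑ x_i² ≤ 7k/3`.
-/

open MeasureTheory Set

noncomputable def Bset2 (n : ℕ) : Set ℝ :=
  Set.Icc 0 (1 - 1 / (n : ℝ) ^ 2) ∪ Set.Icc (n : ℝ) ((n : ℝ) + 1 / (n : ℝ) ^ 2)

open Filter

def IsAveragingSet (p : ℕ) (B : Set ℝ) {k : ℕ} (x : Fin k → ℝ) : Prop :=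
  ∀ q : ℕ, q ≤ p → (k : ℝ)⁻¹ * ∑ j, x j ^ q = ∫ t in B, t ^ q

theorem setIntegral_Icc_pow {a b : ℝ} (hab : a ≤ b) (q : ℕ) :
    ∫ t in Icc a b, t ^ q = (b ^ (q + 1) - a ^ (q + 1)) / (q + 1) := by
  rw [integral_Icc_eq_integral_Ioc, ← intervalIntegral.integral_of_le hab, integral_pow]

theorem integral_Bset2_pow {n : ℕ} (hn : 1 ≤ n) (q : ℕ) :
    ∫ t in Bset2 n, t ^ q =
      (1 - 1 / (n : ℝ) ^ 2) ^ (q + 1) / (q + 1) +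
      (((n : ℝ) + 1 / (n : ℝ) ^ 2) ^ (q + 1) - (n : ℝ) ^ (q + 1)) / (q + 1) := by
  have hn' : (1 : ℝ) ≤ n := by exact_mod_cast hn
  have hε : 0 < 1 / (n : ℝ) ^ 2 := by positivity
  have hε1 : 1 / (n : ℝ) ^ 2 ≤ 1 := div_le_one_of_le₀ (one_le_pow₀ hn') (by positivity)
  have hdisj : Disjoint (Icc (0 : ℝ) (1 - 1 / (n : ℝ) ^ 2)) (Icc (n : ℝ) (n + 1 / (n : ℝ) ^ 2)) :=
    disjoint_left.2 fun t ht ht' => by linarith [ht.2, ht'.1]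
  rw [Bset2, setIntegral_union hdisj measurableSet_Icc (continuous_pow q).integrableOn_Icc
    (continuous_pow q).integrableOn_Icc, setIntegral_Icc_pow (by linarith),
    setIntegral_Icc_pow (by linarith), zero_pow q.succ_ne_zero, sub_zero]

theorem integral_Bset2_sq_le {n : ℕ} (hn : 1 ≤ n) : ∫ t in Bset2 n, t ^ 2 ≤ 7 / 3 := by
  have hn' : (1 : ℝ) ≤ n := by exact_mod_cast hn
  rw [integral_Bset2_pow hn]
  set ε := 1 / (n : ℝ) ^ 2 with hε
  have hε0 : 0 < ε := by positivity
  have hnε : (n : ℝ) ^ 2 * ε = 1 := by rw [hε]; field_simp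
  have hε1 : ε ≤ 1 := div_le_one_of_le₀ (one_le_pow₀ hn') (by positivity)
  have : (n : ℝ) * ε ≤ 1 := by nlinarith
  push_cast
  -- since `n²ε = 1`, the moment is `(1 - ε)³/3 + 1 + (nε)ε + ε³/3 ≤ (1 - ε)³/3 + 1 + ε + ε³/3`
  nlinarith [mul_le_mul_of_nonneg_right this (sq_nonneg ε)]

theorem le_integral_Bset2_pow_three {n : ℕ} (hn : 1 ≤ n) : (n : ℝ) ≤ ∫ t in Bset2 n, t ^ 3 := by
  have hn' : (1 : ℝ) ≤ n := by exact_mod_cast hn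
  rw [integral_Bset2_pow hn]
  set ε := 1 / (n : ℝ) ^ 2 with hε
  have hε0 : 0 < ε := by positivity
  have hnε : (n : ℝ) ^ 2 * ε = 1 := by rw [hε]; field_simp
  have hε1 : ε ≤ 1 := div_le_one_of_le₀ (one_le_pow₀ hn') (by positivity)
  push_cast
  nlinarith [pow_nonneg (sub_nonneg.2 hε1) 4, pow_pos hε0 2, pow_pos hε0 3, pow_pos hε0 4]

theorem rpow_two_thirds_le_sq {a y : ℝ} (ha : 0 ≤ a) (h : a ≤ y ^ 3) : a ^ (2 / 3 : ℝ) ≤ y ^ 2 := by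
  have hy : 0 ≤ y := by
    by_contra! hy
    linarith [Odd.pow_neg (by decide : Odd 3) hy]
  calc a ^ (2 / 3 : ℝ) ≤ (y ^ 3) ^ (2 / 3 : ℝ) := Real.rpow_le_rpow ha h (by norm_num)
    _ = y ^ 2 := by
      rw [← Real.rpow_natCast y 3, ← Real.rpow_mul hy]
      norm_num

theorem rpow_two_thirds_le_sum_sq {ι : Type*} [Fintype ι] [Nonempty ι] {x : ι → ℝ} {a : ℝ}
    (ha : 0 ≤ a) (h : Fintype.card ι * a ≤ ∑ i, x i ^ 3) : a ^ (2 / 3 : ℝ) ≤ ∑ i, x i ^ 2 := by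
  obtain ⟨j, -, hj⟩ := Finset.exists_le_of_sum_le Finset.univ_nonempty (f := fun _ => a)
    (by simpa using h)
  exact (rpow_two_thirds_le_sq ha hj).trans
    (Finset.single_le_sum (fun i _ => sq_nonneg (x i)) (Finset.mem_univ j))

theorem IsAveragingSet.sum_pow_eq {p : ℕ} {B : Set ℝ} {k : ℕ} {x : Fin k → ℝ}
    (hx : IsAveragingSet p B x) (hk : 0 < k) {q : ℕ} (hq : q ≤ p) :
    ∑ j, x j ^ q = k * ∫ t in B, t ^ q :=
  (inv_mul_eq_iff_eq_mul₀ (by positivity)).1 (hx q hq)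

theorem three_div_seven_mul_rpow_le_of_isAveragingSet_Bset2 {n k : ℕ} (hn : 1 ≤ n)
    {x : Fin k → ℝ} (hx : IsAveragingSet 3 (Bset2 n) x) (hk : 0 < k) :
    3 / 7 * (n : ℝ) ^ (2 / 3 : ℝ) ≤ k := by
  have : Nonempty (Fin k) := Fin.pos_iff_nonempty.1 hk
  have hcube : Fintype.card (Fin k) * (n : ℝ) ≤ ∑ j, x j ^ 3 := by
    rw [Fintype.card_fin, hx.sum_pow_eq hk (by norm_num)]
    gcongr
    exact le_integral_Bset2_pow_three hn
  calc 3 / 7 * (n : ℝ) ^ (2 / 3 : ℝ) ≤ 3 / 7 * ∑ j, x j ^ 2 := by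
        gcongr
        exact rpow_two_thirds_le_sum_sq n.cast_nonneg hcube
    _ = 3 / 7 * (k * ∫ t in Bset2 n, t ^ 2) := by rw [hx.sum_pow_eq hk (by norm_num)]
    _ ≤ 3 / 7 * (k * (7 / 3)) := by gcongr; exact integral_Bset2_sq_le hn
    _ = k := by ring

/-- For every `m` there is `n₀` such that for all `n ≥ n₀` there is no
averaging set of order 3 of `B_{n,2}` of size `≤ m`, even allowing points anywhere in `ℝ`.
Quantitatively: if `x₁,…,x_k ∈ ℝ` satisfy `(1/k)∑ x_j^q = ∫_{B_{n,2}} t^q dt` for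
`q = 0,1,2,3`, then `k ≥ (3/7)·n^{2/3}`. -/
theorem stmt15 :
    (∀ m : ℕ, ∃ n₀ : ℕ, ∀ n : ℕ, n₀ ≤ n →
      ¬ ∃ (k : ℕ) (x : Fin k → ℝ), 0 < k ∧ k ≤ m ∧
        (∀ q : ℕ, q ≤ 3 →
          (k : ℝ)⁻¹ * ∑ j, x j ^ q = ∫ t in Bset2 n, t ^ q)) ∧
    (∀ n : ℕ, 1 ≤ n → ∀ (k : ℕ) (x : Fin k → ℝ), 0 < k →
      (∀ q : ℕ, q ≤ 3 → (k : ℝ)⁻¹ * ∑ j, x j ^ q = ∫ t in Bset2 n, t ^ q) →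
      (3 / 7 : ℝ) * (n : ℝ) ^ ((2 : ℝ) / 3) ≤ k) := by
  refine ⟨fun m => ?_, fun n hn k x hk hx =>
    three_div_seven_mul_rpow_le_of_isAveragingSet_Bset2 hn hx hk⟩
  have htendsto : Tendsto (fun n : ℕ => 3 / 7 * (n : ℝ) ^ (2 / 3 : ℝ)) atTop atTop :=
    ((tendsto_rpow_atTop (by norm_num)).comp tendsto_natCast_atTop_atTop).const_mul_atTop
      (by norm_num)
  obtain ⟨n₀, hn₀⟩ := eventually_atTop.1
    ((eventually_ge_atTop 1).and (htendsto.eventually_gt_atTop (m : ℝ)))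
  refine ⟨n₀, fun n hn ⟨k, x, hk, hkm, hx⟩ => ?_⟩
  obtain ⟨hn1, hm⟩ := hn₀ n hn
  have hkm' : (k : ℝ) ≤ m := by exact_mod_cast hkm
  linarith [three_div_seven_mul_rpow_le_of_isAveragingSet_Bset2 hn1 hx hk]
end
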